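/- Let n ≥ 1 and let V : ℝ → ℝ be continuous with lim_{x→±∞} V(x)/(|x|+1) = +∞. Define Z'_n := ∫_{ℝⁿ} ∏_{1≤i<j≤n}(λ_j − λ_i)(e^{λ_j} − e^{λ_i}) · ∏_{j=1}^n e^{−nV(λ_j)} dλ₁⋯dλ_n, and for z ∈ ℝ define E_n(z) := ∫_{ℝⁿ} ∏_{j=1}^n (e^z − e^{λ_j}) · ∏_{1≤i<j≤n}(λ_j − λ_i)(e^{λ_j} − e^{λ_i}) · ∏_{j=1}^n e^{−nV(λ_j)} dλ₁⋯dλ_n. Then all these integrals are finite, Z'_n > 0, there is a polynomial Q with real coefficients, degree n and leading coefficient Z'_n such that E_n(z) = Q(e^z) for all z ∈ ℝ, and ∫_ℝ x^k E_n(x) e^{−nV(x)} dx = 0 for every k ∈ {0, 1, …, n−1}. Consequently, (1/Z'_n)·E_n(z) = q_n(e^z), where q_n is any monic degree-n polynomial satisfying the orthogonality conditions ∫_ℝ x^k q_n(e^x) e^{−nV(x)} dx = 0 for k = 0, …, n−1, provided such a q_n is unique. -/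

import Mathlib

open MeasureTheory Filter

/-- The eigenvalue weight `∏_{i<j}(λ_j − λ_i)(e^{λ_j} − e^{λ_i}) ∏_j e^{−nV(λ_j)}` of the
equispaced external source model. -/
noncomputable def eigWeight (V : ℝ → ℝ) (n : ℕ) (lam : Fin n → ℝ) : ℝ :=
  (∏ p ∈ Finset.univ.filter (fun p : Fin n × Fin n => p.1 < p.2),
      ((lam p.2 - lam p.1) * (Real.exp (lam p.2) - Real.exp (lam p.1))))
    * ∏ j, Real.exp (-(n : ℝ) * V (lam j))

/-- The normalization constant `Z'_n`. -/
noncomputable def Zn (V : ℝ → ℝ) (n : ℕ) : ℝ :=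
  ∫ lam : Fin n → ℝ, eigWeight V n lam

/-- The unnormalized average `E_n(z) = ∫ ∏_j (e^z − e^{λ_j}) · weight(λ) dλ`. -/
noncomputable def En (V : ℝ → ℝ) (n : ℕ) (z : ℝ) : ℝ :=
  ∫ lam : Fin n → ℝ, (∏ j, (Real.exp z - Real.exp (lam j))) * eigWeight V n lam

/-!
Both Vandermonde factors of the weight, `Δ(λ)` and `Δ(e^λ)`, expand by the Leibniz formula, and
`∏_j (e^z - e^{λ_j}) Δ(e^λ) = (-1)^n Δ(e^z, e^{λ_1}, …, e^{λ_n})`. Hence the integrands of `Z'_n`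
and `E_n(z)` are signed sums of products `∏_j λ_j^{a_j} e^{b_j λ_j} e^{-nV(λ_j)}`, each integrable
because `V` grows superlinearly, and integrating term by term turns the characteristic polynomial
`∏_j (X - e^{λ_j})` into a polynomial `Q` with `E_n(z) = Q(e^z)`; its top coefficient is `Z'_n`
since the characteristic polynomial is monic. Integrating `x^k E_n(x) e^{-nV(x)}` produces, for each
`τ`, the determinant of the moment matrix `[∫ x^{r_i} e^{jx} e^{-nV(x)} dx]` with row indices
`r = (k, τ 0, …, τ (n-1))`, which repeat when `k < n`. Finally `Z'_n > 0` because the weight is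
continuous, nonnegative, and positive at increasing `λ`, and the last claim is uniqueness applied to
`Q / Z'_n`.
-/

section Determinants

open Finset Matrix Equiv

theorem Matrix.det_eq_sum_sign_mul_prod {ι R : Type*} [Fintype ι] [DecidableEq ι] [CommRing R]
    (A : Matrix ι ι R) :
    A.det = ∑ σ : Perm ι, (Perm.sign σ : R) * ∏ i, A i (σ i) := by
  rw [← det_transpose, det_apply']
  rfl

theorem sum_sign_mul_prod_eq_zero_of_not_injective {ι α R : Type*} [Fintype ι] [DecidableEq ι]
    [CommRing R] (M : α → ι → R) {r : ι → α} (hr : ¬ Function.Injective r) :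
    ∑ σ : Perm ι, (Perm.sign σ : R) * ∏ i, M (r i) (σ i) = 0 := by
  obtain ⟨i, j, hij, hne⟩ : ∃ i j, r i = r j ∧ i ≠ j := by
    simpa [Function.Injective] using hr
  exact (det_eq_sum_sign_mul_prod (Matrix.of fun i j => M (r i) j)).symm.trans
    (det_zero_of_row_eq hne (funext fun k => by simp [hij]))

theorem Matrix.det_vandermonde_eq_sum {R : Type*} [CommRing R] {m : ℕ} (v : Fin m → R) :
    (vandermonde v).det = ∑ σ : Perm (Fin m), (Perm.sign σ : R) * ∏ i, v i ^ (σ i : ℕ) :=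
  det_eq_sum_sign_mul_prod _

theorem Matrix.det_vandermonde_cons {R : Type*} [CommRing R] {m : ℕ} (x : R) (v : Fin m → R) :
    (vandermonde (Fin.cons x v : Fin (m + 1) → R)).det
      = (∏ j, (v j - x)) * (vandermonde v).det := by
  rw [det_vandermonde, det_vandermonde, Fin.prod_univ_succ, Fin.prod_Ioi_zero]
  simp

theorem Matrix.prod_sub_mul_det_vandermonde {R : Type*} [CommRing R] {m : ℕ} (x : R) (v : Fin m → R) :
    (∏ j, (x - v j)) * (vandermonde v).det
      = (-1) ^ m * ∑ σ : Perm (Fin (m + 1)),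
          (Perm.sign σ : R) * x ^ (σ 0 : ℕ) * ∏ j, v j ^ (σ j.succ : ℕ) := by
  have hneg : ∏ j, (x - v j) = (-1) ^ m * ∏ j, (v j - x) := by
    simpa using prod_neg (s := univ) fun j => v j - x
  rw [hneg, mul_assoc, ← det_vandermonde_cons, det_vandermonde_eq_sum]
  simp [Fin.prod_univ_succ, mul_assoc]

end Determinants

theorem Continuous.exists_forall_mul_abs_add_one_sub_le {f : ℝ → ℝ} (hf : Continuous f)
    (htop : Tendsto (fun x => f x / (|x| + 1)) atTop atTop)
    (hbot : Tendsto (fun x => f x / (|x| + 1)) atBot atTop) (m : ℝ) :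
    ∃ C, ∀ x, m * (|x| + 1) - C ≤ f x := by
  have hlim : ∀ l : Filter ℝ, Tendsto (fun x => |x|) l atTop →
      Tendsto (fun x => f x / (|x| + 1)) l atTop →
      Tendsto (fun x => f x - m * (|x| + 1)) l atTop := by
    intro l habs hf
    refine ((tendsto_atTop_add_const_right l 1 habs).atTop_mul_atTop₀
      (tendsto_atTop_add_const_right l (-m) hf)).congr fun x => ?_
    have : |x| + 1 ≠ 0 := by positivity
    field_simp
    ring
  have hcont : Continuous fun x => f x - m * (|x| + 1) := by fun_prop
  obtain ⟨x₀, hx₀⟩ := hcont.exists_forall_le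
    (by rw [cocompact_eq_atBot_atTop]
        exact (hlim _ tendsto_abs_atBot_atTop hbot).sup (hlim _ tendsto_abs_atTop_atTop htop))
  exact ⟨-(f x₀ - m * (|x₀| + 1)), fun x => by linarith [hx₀ x]⟩

theorem integrable_exp_neg_abs : Integrable fun x : ℝ => Real.exp (-|x|) := by
  have hpos : IntegrableOn (fun x : ℝ => Real.exp (-|x|)) (Set.Ioi 0) :=
    (exp_neg_integrableOn_Ioi 0 one_pos).congr_fun
      (fun x hx => by simp [abs_of_pos (Set.mem_Ioi.mp hx)]) measurableSet_Ioi
  have hneg : IntegrableOn (fun x : ℝ => Real.exp (-|x|)) (Set.Iic 0) :=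
    (integrableOn_exp_Iic 0).congr_fun
      (fun x hx => by simp [abs_of_nonpos (Set.mem_Iic.mp hx)]) measurableSet_Iic
  simpa [Set.Iic_union_Ioi] using hneg.union hpos

theorem integrable_pow_mul_exp_mul_exp_neg_mul {V : ℝ → ℝ} (hV : Continuous V)
    (htop : Tendsto (fun x => V x / (|x| + 1)) atTop atTop)
    (hbot : Tendsto (fun x => V x / (|x| + 1)) atBot atTop) {c : ℝ} (hc : 0 < c) (a : ℕ)
    (b : ℝ) : Integrable fun t => t ^ a * Real.exp (b * t) * Real.exp (-c * V t) := by
  have hgrowth : ∀ l, Tendsto (fun x => V x / (|x| + 1)) l atTop →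
      Tendsto (fun x => c * V x / (|x| + 1)) l atTop := fun l h => by
    simpa only [mul_div_assoc] using h.const_mul_atTop hc
  have hcV : Continuous fun x => c * V x := by fun_prop
  obtain ⟨C, hC⟩ := hcV.exists_forall_mul_abs_add_one_sub_le
    (hgrowth _ htop) (hgrowth _ hbot) (|b| + 2)
  refine (integrable_exp_neg_abs.const_mul (a.factorial * Real.exp C)).mono'
    (by fun_prop) (Eventually.of_forall fun t => ?_)
  have hpow : |t| ^ a ≤ a.factorial * Real.exp |t| := by
    have := Real.pow_div_factorial_le_exp _ (abs_nonneg t) a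
    rwa [div_le_iff₀ (by positivity), mul_comm] at this
  have hexp : b * t + -c * V t ≤ C - 2 * |t| := by
    nlinarith [hC t, le_abs_self (b * t), abs_mul b t, abs_nonneg b]
  calc ‖t ^ a * Real.exp (b * t) * Real.exp (-c * V t)‖
      = |t| ^ a * Real.exp (b * t + -c * V t) := by
        rw [Real.exp_add, Real.norm_eq_abs, abs_mul, abs_mul, abs_pow, Real.abs_exp,
          Real.abs_exp, mul_assoc]
    _ ≤ (a.factorial * Real.exp |t|) * Real.exp (C - 2 * |t|) := by gcongr
    _ ≤ a.factorial * Real.exp C * Real.exp (-|t|) := by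
        rw [mul_assoc, mul_assoc, ← Real.exp_add, ← Real.exp_add]
        refine mul_le_mul_of_nonneg_left (Real.exp_le_exp.mpr ?_) (by positivity)
        linarith

section IntegralOfFiniteRank

variable {α ι E : Type*} [MeasurableSpace α] {μ : Measure α} [AddCommGroup E] [Module ℝ E]

theorem integrable_map_sum_smul (L : E →ₗ[ℝ] ℝ) {s : Finset ι} {c : ι → α → ℝ} (p : ι → E)
    (hc : ∀ i ∈ s, Integrable (c i) μ) :
    Integrable (fun a => L (∑ i ∈ s, c i a • p i)) μ := by
  simp only [map_sum, map_smul, smul_eq_mul]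
  exact integrable_finsetSum _ fun i hi => (hc i hi).mul_const _

theorem map_sum_integral_smul (L : E →ₗ[ℝ] ℝ) {s : Finset ι} {c : ι → α → ℝ} (p : ι → E)
    (hc : ∀ i ∈ s, Integrable (c i) μ) :
    L (∑ i ∈ s, (∫ a, c i a ∂μ) • p i) = ∫ a, L (∑ i ∈ s, c i a • p i) ∂μ := by
  simp only [map_sum, map_smul, smul_eq_mul]
  rw [integral_finsetSum _ fun i hi => (hc i hi).mul_const _]
  simp only [integral_mul_const]

end IntegralOfFiniteRank

theorem Finset.prod_filter_fst_lt_snd {ι M : Type*} [Fintype ι] [LinearOrder ι]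
    [LocallyFiniteOrderTop ι] [CommMonoid M] (f : ι → ι → M) :
    ∏ p ∈ Finset.univ.filter (fun p : ι × ι => p.1 < p.2), f p.1 p.2
      = ∏ i, ∏ j ∈ Finset.Ioi i, f i j := by
  rw [Finset.prod_filter, Fintype.prod_prod_type]
  refine Finset.prod_congr rfl fun i _ => ?_
  rw [← Finset.prod_filter, Finset.filter_lt_eq_Ioi]

theorem Polynomial.coeff_prod_X_sub_C_self {R : Type*} [CommRing R] [Nontrivial R] {m : ℕ}
    (a : Fin m → R) : (∏ j, (X - C (a j))).coeff m = 1 := by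
  simpa using (monic_prod_of_monic Finset.univ _ fun j _ => monic_X_sub_C (a j)).coeff_natDegree

namespace EquispacedSource

open Finset Matrix Equiv Polynomial

variable {n : ℕ} {V : ℝ → ℝ}

noncomputable def momentDensity (n : ℕ) (V : ℝ → ℝ) (a b : ℕ) (t : ℝ) : ℝ :=
  t ^ a * Real.exp t ^ b * Real.exp (-(n : ℝ) * V t)

noncomputable def moment (n : ℕ) (V : ℝ → ℝ) (a b : ℕ) : ℝ :=
  ∫ t, momentDensity n V a b t

/-- The `σ`-term `(-1)^n sign σ · x^{σ 0} ∏_j e^{σ(j+1) λ_j}` of the Leibniz expansion of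
`(-1)^n Δ(x, e^{λ_1}, …, e^{λ_n})`, with `x^{σ 0}` removed, times the Leibniz expansion of
`Δ(λ) ∏_j e^{-nV(λ_j)}`. -/
noncomputable def coeffDensity (n : ℕ) (V : ℝ → ℝ) (σ : Perm (Fin (n + 1)))
    (lam : Fin n → ℝ) : ℝ :=
  (-1) ^ n * Perm.sign σ *
    ∑ τ : Perm (Fin n), Perm.sign τ * ∏ j, momentDensity n V (τ j) (σ j.succ) (lam j)

noncomputable def charPolyDensity (n : ℕ) (V : ℝ → ℝ) (lam : Fin n → ℝ) : ℝ[X] :=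
  ∑ σ : Perm (Fin (n + 1)), coeffDensity n V σ lam • X ^ (σ 0 : ℕ)

/-- The polynomial `Q` of the theorem: the coefficientwise integral of `charPolyDensity`. -/
noncomputable def avgCharPoly (n : ℕ) (V : ℝ → ℝ) : ℝ[X] :=
  ∑ σ : Perm (Fin (n + 1)), (∫ lam, coeffDensity n V σ lam) • X ^ (σ 0 : ℕ)

theorem integrable_momentDensity (hn : 0 < n) (hV : Continuous V)
    (htop : Tendsto (fun x => V x / (|x| + 1)) atTop atTop)
    (hbot : Tendsto (fun x => V x / (|x| + 1)) atBot atTop) (a b : ℕ) :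
    Integrable (momentDensity n V a b) := by
  refine (integrable_pow_mul_exp_mul_exp_neg_mul hV htop hbot (Nat.cast_pos.mpr hn) a b).congr
    (Eventually.of_forall fun t => ?_)
  simp [momentDensity, ← Real.exp_nat_mul]

theorem eigWeight_eq_det_mul_det (lam : Fin n → ℝ) :
    eigWeight V n lam = (vandermonde fun j => Real.exp (lam j)).det * (vandermonde lam).det *
      ∏ j, Real.exp (-(n : ℝ) * V (lam j)) := by
  rw [eigWeight, prod_mul_distrib, prod_filter_fst_lt_snd (fun i j => lam j - lam i),
    prod_filter_fst_lt_snd (fun i j => Real.exp (lam j) - Real.exp (lam i)),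
    det_vandermonde, det_vandermonde, mul_comm (∏ i, ∏ j ∈ Ioi i, (lam j - lam i))]

theorem prod_sub_exp_mul_eigWeight (x : ℝ) (lam : Fin n → ℝ) :
    (∏ j, (x - Real.exp (lam j))) * eigWeight V n lam
      = ∑ σ, coeffDensity n V σ lam * x ^ (σ 0 : ℕ) := by
  rw [eigWeight_eq_det_mul_det, ← mul_assoc, ← mul_assoc, prod_sub_mul_det_vandermonde,
    det_vandermonde_eq_sum]
  simp only [coeffDensity, momentDensity, mul_sum, sum_mul, prod_mul_distrib]
  rw [sum_comm]
  exact sum_congr rfl fun σ _ => sum_congr rfl fun τ _ => by ring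

theorem charPolyDensity_eq (lam : Fin n → ℝ) :
    charPolyDensity n V lam = C (eigWeight V n lam) * ∏ j, (X - C (Real.exp (lam j))) := by
  refine Polynomial.funext fun x => ?_
  simp only [charPolyDensity, eval_finsetSum, eval_smul, eval_pow, eval_X, smul_eq_mul,
    eval_mul, eval_C, eval_prod, eval_sub, ← prod_sub_exp_mul_eigWeight]
  ring

theorem eigWeight_nonneg (lam : Fin n → ℝ) : 0 ≤ eigWeight V n lam := by
  refine mul_nonneg (prod_nonneg fun p _ => ?_) (prod_nonneg fun j _ => (Real.exp_pos _).le)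
  rcases le_total (lam p.1) (lam p.2) with h | h
  · exact mul_nonneg (sub_nonneg.mpr h) (sub_nonneg.mpr (Real.exp_le_exp.mpr h))
  · exact mul_nonneg_of_nonpos_of_nonpos (sub_nonpos.mpr h) (sub_nonpos.mpr (Real.exp_le_exp.mpr h))

theorem eigWeight_pos_of_strictMono {lam : Fin n → ℝ} (hlam : StrictMono lam) :
    0 < eigWeight V n lam := by
  refine mul_pos (prod_pos fun p hp => ?_) (prod_pos fun j _ => Real.exp_pos _)
  have hlt := hlam (mem_filter.mp hp).2
  exact mul_pos (sub_pos.mpr hlt) (sub_pos.mpr (Real.exp_lt_exp.mpr hlt))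

theorem continuous_eigWeight (hV : Continuous V) : Continuous (eigWeight V n) := by
  unfold eigWeight
  fun_prop

theorem Zn_pos (hV : Continuous V) (hint : Integrable (eigWeight V n)) : 0 < Zn V n := by
  rw [Zn, integral_pos_iff_support_of_nonneg eigWeight_nonneg hint]
  refine lt_of_lt_of_le ?_ (measure_mono fun lam (h : 0 < eigWeight V n lam) => h.ne')
  exact (isOpen_lt continuous_const (continuous_eigWeight hV)).measure_pos volume
    ⟨fun j => (j : ℝ), eigWeight_pos_of_strictMono fun i j h => by simpa using h⟩

theorem natDegree_avgCharPoly_le : (avgCharPoly n V).natDegree ≤ n :=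
  natDegree_sum_le_of_forall_le _ _ fun σ _ =>
    (natDegree_smul_le _ _).trans ((natDegree_X_pow_le _).trans (Nat.lt_succ_iff.mp (σ 0).isLt))

section Integrals

variable (hmom : ∀ a b, Integrable (momentDensity n V a b))
include hmom

theorem integrable_coeffDensity (σ : Perm (Fin (n + 1))) :
    Integrable (coeffDensity n V σ) :=
  (integrable_finsetSum _ fun τ _ =>
    (Integrable.fintype_prod fun j => hmom (τ j) (σ j.succ)).const_mul _).const_mul _

theorem integral_coeffDensity (σ : Perm (Fin (n + 1))) :
    ∫ lam, coeffDensity n V σ lam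
      = (-1) ^ n * Perm.sign σ *
          ∑ τ : Perm (Fin n), Perm.sign τ * ∏ j, moment n V (τ j) (σ j.succ) := by
  simp only [coeffDensity]
  rw [integral_const_mul, integral_finsetSum _ fun τ _ =>
    (Integrable.fintype_prod fun j => hmom (τ j) (σ j.succ)).const_mul _]
  simp only [integral_const_mul, moment]
  congr
  ext τ
  rw [integral_fintype_prod_volume_eq_prod]

theorem integrable_apply_charPolyDensity (L : ℝ[X] →ₗ[ℝ] ℝ) :
    Integrable fun lam => L (charPolyDensity n V lam) :=
  integrable_map_sum_smul L _ fun σ _ => integrable_coeffDensity hmom σ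

theorem apply_avgCharPoly (L : ℝ[X] →ₗ[ℝ] ℝ) :
    L (avgCharPoly n V) = ∫ lam, L (charPolyDensity n V lam) :=
  map_sum_integral_smul L _ fun σ _ => integrable_coeffDensity hmom σ

theorem integrable_eigWeight : Integrable (eigWeight V n) := by
  simpa only [charPolyDensity_eq, lcoeff_apply, coeff_C_mul, coeff_prod_X_sub_C_self, mul_one]
    using integrable_apply_charPolyDensity hmom (lcoeff ℝ n)

theorem integrable_prod_exp_sub_mul_eigWeight (z : ℝ) :
    Integrable fun lam : Fin n → ℝ =>
      (∏ j, (Real.exp z - Real.exp (lam j))) * eigWeight V n lam := by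
  simpa only [charPolyDensity_eq, leval_apply, eval_mul, eval_C, eval_prod, eval_sub, eval_X,
    mul_comm (eigWeight V n _)] using integrable_apply_charPolyDensity hmom (leval (Real.exp z))

theorem eval_exp_avgCharPoly (z : ℝ) : (avgCharPoly n V).eval (Real.exp z) = En V n z := by
  simpa only [charPolyDensity_eq, leval_apply, eval_mul, eval_C, eval_prod, eval_sub, eval_X,
    mul_comm (eigWeight V n _), En] using apply_avgCharPoly hmom (leval (Real.exp z))

theorem coeff_avgCharPoly_self : (avgCharPoly n V).coeff n = Zn V n := by
  simpa only [charPolyDensity_eq, lcoeff_apply, coeff_C_mul, coeff_prod_X_sub_C_self, mul_one,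
    Zn] using apply_avgCharPoly hmom (lcoeff ℝ n)

theorem integral_pow_mul_En_mul_exp_eq_zero {k : ℕ} (hk : k < n) :
    ∫ x, x ^ k * En V n x * Real.exp (-(n : ℝ) * V x) = 0 := by
  have hEn : ∀ x, En V n x = ∑ σ : Perm (Fin (n + 1)),
      (∫ lam, coeffDensity n V σ lam) * Real.exp x ^ (σ 0 : ℕ) := fun x => by
    simp [← eval_exp_avgCharPoly hmom, avgCharPoly, eval_finsetSum]
  calc ∫ x, x ^ k * En V n x * Real.exp (-(n : ℝ) * V x)
      = ∫ x, ∑ σ : Perm (Fin (n + 1)),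
          (∫ lam, coeffDensity n V σ lam) * momentDensity n V k (σ 0) x := by
        congr 1 with x
        simp only [hEn, momentDensity, mul_sum, sum_mul]
        exact sum_congr rfl fun σ _ => by ring
    _ = ∑ σ : Perm (Fin (n + 1)), (∫ lam, coeffDensity n V σ lam) * moment n V k (σ 0) := by
        rw [integral_finsetSum _ fun σ _ => (hmom _ _).const_mul _]
        simp only [integral_const_mul, moment]
    _ = (-1) ^ n * ∑ τ : Perm (Fin n), Perm.sign τ * ∑ σ : Perm (Fin (n + 1)), Perm.sign σ *
          ∏ i, moment n V ((Fin.cons k fun j => (τ j : ℕ) : Fin (n + 1) → ℕ) i) (σ i) := by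
        simp only [integral_coeffDensity hmom, Fin.prod_univ_succ, Fin.cons_zero, Fin.cons_succ,
          mul_sum, sum_mul]
        rw [sum_comm]
        exact sum_congr rfl fun τ _ => sum_congr rfl fun σ _ => by ring
    _ = 0 := by
        refine mul_eq_zero_of_right _ (sum_eq_zero fun τ _ => mul_eq_zero_of_right _ ?_)
        refine sum_sign_mul_prod_eq_zero_of_not_injective
          (fun a (i : Fin (n + 1)) => moment n V a i) fun hinj => ?_
        -- the row index `k` occurs again as `τ j`
        obtain ⟨j, hj⟩ := τ.surjective ⟨k, hk⟩
        exact Fin.succ_ne_zero j (hinj (by simp [hj]))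

theorem natDegree_avgCharPoly (hZ : Zn V n ≠ 0) : (avgCharPoly n V).natDegree = n :=
  natDegree_eq_of_le_of_coeff_ne_zero natDegree_avgCharPoly_le
    ((coeff_avgCharPoly_self hmom).trans_ne hZ)

theorem leadingCoeff_avgCharPoly (hZ : Zn V n ≠ 0) : (avgCharPoly n V).leadingCoeff = Zn V n := by
  rw [leadingCoeff, natDegree_avgCharPoly hmom hZ, coeff_avgCharPoly_self hmom]

theorem one_div_Zn_mul_En_eq_eval (hZ : Zn V n ≠ 0) {q : ℝ[X]}
    (huniq : ∀ q' : ℝ[X], q'.Monic → q'.natDegree = n →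
      (∀ k < n, ∫ x, x ^ k * q'.eval (Real.exp x) * Real.exp (-(n : ℝ) * V x) = 0) → q' = q)
    (z : ℝ) : (1 / Zn V n) * En V n z = q.eval (Real.exp z) := by
  have hZinv : 1 / Zn V n ≠ 0 := one_div_ne_zero hZ
  rw [← huniq (C (1 / Zn V n) * avgCharPoly n V), eval_mul, eval_C, eval_exp_avgCharPoly hmom]
  · exact monic_C_mul_of_mul_leadingCoeff_eq_one (by
      rw [leadingCoeff_avgCharPoly hmom hZ, one_div_mul_cancel hZ])
  · rw [natDegree_C_mul hZinv, natDegree_avgCharPoly hmom hZ]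
  · intro k hk
    have hscale : ∀ x : ℝ, x ^ k * (C (1 / Zn V n) * avgCharPoly n V).eval (Real.exp x) *
        Real.exp (-(n : ℝ) * V x) = 1 / Zn V n * (x ^ k * En V n x * Real.exp (-(n : ℝ) * V x)) :=
      fun x => by rw [eval_mul, eval_C, eval_exp_avgCharPoly hmom]; ring
    simp_rw [hscale, integral_const_mul, integral_pow_mul_En_mul_exp_eq_zero hmom hk, mul_zero]

end Integrals

end EquispacedSource

open EquispacedSource

theorem average_is_type_I_polynomial
    (n : ℕ) (hn : 1 ≤ n) (V : ℝ → ℝ) (hcont : Continuous V)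
    (hgrowth : Tendsto (fun x => V x / (|x| + 1)) atTop atTop ∧
      Tendsto (fun x => V x / (|x| + 1)) atBot atTop) :
    Integrable (eigWeight V n) ∧
    (∀ z : ℝ, Integrable (fun lam : Fin n → ℝ =>
      (∏ j, (Real.exp z - Real.exp (lam j))) * eigWeight V n lam)) ∧
    0 < Zn V n ∧
    (∃ Q : Polynomial ℝ, Q.natDegree = n ∧ Q.leadingCoeff = Zn V n ∧
      ∀ z : ℝ, En V n z = Q.eval (Real.exp z)) ∧
    (∀ k < n, ∫ x : ℝ, x ^ k * En V n x * Real.exp (-(n : ℝ) * V x) = 0) ∧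
    (∀ q : Polynomial ℝ, q.Monic → q.natDegree = n →
      (∀ k < n, ∫ x : ℝ, x ^ k * q.eval (Real.exp x) * Real.exp (-(n : ℝ) * V x) = 0) →
      (∀ q' : Polynomial ℝ, q'.Monic → q'.natDegree = n →
        (∀ k < n, ∫ x : ℝ, x ^ k * q'.eval (Real.exp x) * Real.exp (-(n : ℝ) * V x) = 0) →
        q' = q) →
      ∀ z : ℝ, (1 / Zn V n) * En V n z = q.eval (Real.exp z)) := by
  obtain ⟨htop, hbot⟩ := hgrowth
  have hmom := integrable_momentDensity hn hcont htop hbot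
  have hint := integrable_eigWeight hmom
  have hZ := Zn_pos hcont hint
  exact ⟨hint, integrable_prod_exp_sub_mul_eigWeight hmom, hZ,
    ⟨avgCharPoly n V, natDegree_avgCharPoly hmom hZ.ne', leadingCoeff_avgCharPoly hmom hZ.ne',
      fun z => (eval_exp_avgCharPoly hmom z).symm⟩,
    fun k hk => integral_pow_mul_En_mul_exp_eq_zero hmom hk,
    fun q _ _ _ huniq => one_div_Zn_mul_En_eq_eval hmom hZ.ne' huniq⟩
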